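/- arXiv:1905.06635 — 5 statements merged into one kernel-verified Lean document; each statement's English description precedes it below -/
import Mathlib

section
/- Bound on the submodularity index via the optimal value: let F : Finset V → ℝ be a nonnegative set function on a finite set V and let C ⊆ V be a maximizer of F over all subsets of V. Then −2·F(C) ≤ λ_F(V, 2) ≤ 2·F(C). -/
open Finset

variable {V : Type*} [Fintype V] [DecidableEq V]

/-- The marginal gain `F_S(A) = F(A ∪ S) − F(A)` generalizes `F_x(A)` via `S = {x}`.
The submodularity index (SmI) of `F` for a set `L ⊆ V` and cardinality `k` is the
minimum of `∑ x ∈ S, F_x(A) − F_S(A)` over all pairs `(S, A)` with `A ⊆ L`,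
`S ∩ A = ∅`, and `|S| ≤ k`. -/
noncomputable def smI (F : Finset V → ℝ) (L : Finset V) (k : ℕ) : ℝ :=
  (Finset.univ.filter (fun p : Finset V × Finset V =>
      p.2 ⊆ L ∧ p.1 ∩ p.2 = ∅ ∧ p.1.card ≤ k)).inf'
    ⟨(∅, ∅), by simp⟩
    (fun p => (∑ x ∈ p.1, (F (p.2 ∪ {x}) - F p.2)) - (F (p.2 ∪ p.1) - F p.2))

/-- Each of the `|S| - 1` surplus copies of `-F(A)` and the term `-F(A ∪ S)` costs at most `M`. -/
theorem neg_card_mul_le_sum_marginal_sub_marginal {α : Type*} [DecidableEq α]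
    {F : Finset α → ℝ} {M : ℝ} (hF : ∀ A, 0 ≤ F A) (hFM : ∀ A, F A ≤ M) (S A : Finset α) :
    -(#S * M) ≤ (∑ x ∈ S, (F (A ∪ {x}) - F A)) - (F (A ∪ S) - F A) := by
  rcases S.eq_empty_or_nonempty with rfl | hS
  · simp
  have hcard : (1 : ℝ) ≤ #S := mod_cast hS.card_pos
  have hsum_nonneg : 0 ≤ ∑ x ∈ S, F (A ∪ {x}) := sum_nonneg fun x _ => hF _
  rw [sum_sub_distrib, sum_const, nsmul_eq_mul]
  nlinarith [hF A, hFM A, hFM (A ∪ S)]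

theorem smI_le_zero (F : Finset V → ℝ) (L : Finset V) (k : ℕ) : smI F L k ≤ 0 :=
  (inf'_le _ (b := ((∅ : Finset V), (∅ : Finset V))) (by simp)).trans_eq (by simp)

theorem neg_mul_le_smI {F : Finset V → ℝ} {M : ℝ} (hF : ∀ A, 0 ≤ F A) (hFM : ∀ A, F A ≤ M)
    (L : Finset V) (k : ℕ) : -(k * M) ≤ smI F L k := by
  have hM : 0 ≤ M := (hF ∅).trans (hFM ∅)
  refine le_inf' _ _ fun p hp => ?_
  have hcard : (#p.1 : ℝ) ≤ k := mod_cast (mem_filter.mp hp).2.2.2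
  calc -(k * M) ≤ -(#p.1 * M) := by nlinarith
    _ ≤ _ := neg_card_mul_le_sum_marginal_sub_marginal hF hFM p.1 p.2

/-- Bound on the submodularity index via the optimal value: if `F` is nonnegative and
`C` maximizes `F` over all subsets of `V`, then `−2 F(C) ≤ λ_F(V, 2) ≤ 2 F(C)`. -/
theorem smI_bound_by_optimal (F : Finset V → ℝ)
    (hF : ∀ A : Finset V, 0 ≤ F A)
    (C : Finset V) (hC : ∀ A : Finset V, F A ≤ F C) :
    -2 * F C ≤ smI F Finset.univ 2 ∧ smI F Finset.univ 2 ≤ 2 * F C := by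
  refine ⟨?_, ?_⟩
  · simpa [neg_mul] using neg_mul_le_smI hF hC univ 2
  · linarith [smI_le_zero F univ 2, hF C]
end

section
/- Degradation of single-element marginal gains controlled by the submodularity index (Lemma 2 of the paper): let F : Finset V → ℝ be a set function on a finite set V, let A ⊆ B ⊆ V with |B \ A| = M, and let x ∈ V \ B. Then F_x(A) − F_x(B) ≥ M · λ_F(B, 2). -/
/-!
Adjoin the elements of `B \ A` to `A` one at a time. Adding `y` to a set `C ⊆ B` not containing
`x, y` lowers the marginal gain of `x` by `F_x(C) − F_x(C ∪ {y})`, which is exactly the quantity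
minimised in `λ_F(B, 2)` at the pair `({x, y}, C)`; summing the `M` steps gives the bound.
-/

open Finset

variable {V : Type*} [Fintype V] [DecidableEq V]

section

variable (F : Finset V → ℝ) {L A : Finset V}

lemma smI_le {S : Finset V} {k : ℕ} (hA : A ⊆ L) (hSA : S ∩ A = ∅) (hS : #S ≤ k) :
    smI F L k ≤ (∑ x ∈ S, (F (A ∪ {x}) - F A)) - (F (A ∪ S) - F A) :=
  inf'_le (b := (S, A)) _ (by simp [hA, hSA, hS])

lemma smI_two_le_marginal_sub_marginal_insert (hA : A ⊆ L) {x y : V}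
    (hx : x ∉ A) (hy : y ∉ A) (hxy : x ≠ y) :
    smI F L 2 ≤ (F (A ∪ {x}) - F A) - (F (A ∪ {y} ∪ {x}) - F (A ∪ {y})) := by
  have hdisj : {x, y} ∩ A = ∅ := by grind
  have h := smI_le F hA hdisj card_le_two
  rw [sum_pair hxy, show A ∪ {x, y} = A ∪ {y} ∪ {x} by grind] at h
  linarith

lemma card_mul_smI_two_le_marginal_sub_marginal {D : Finset V} (hAD : A ∪ D ⊆ L)
    (hdisj : Disjoint A D) {x : V} (hx : x ∉ A ∪ D) :
    #D * smI F L 2 ≤ (F (A ∪ {x}) - F A) - (F (A ∪ D ∪ {x}) - F (A ∪ D)) := by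
  induction D using Finset.induction_on with
  | empty => simp
  | insert y D hyD ih =>
    have hunion : A ∪ insert y D = A ∪ D ∪ {y} := by grind
    rw [hunion] at hAD hx ⊢
    have hyAD : y ∉ A ∪ D := by grind [disjoint_left]
    have hstep := smI_two_le_marginal_sub_marginal_insert F (subset_union_left.trans hAD)
      (x := x) (y := y) (by grind) hyAD (by grind)
    have hprev := ih (subset_union_left.trans hAD)
      (disjoint_of_subset_right (subset_insert y D) hdisj) (by grind)
    rw [card_insert_of_notMem hyD]
    push_cast
    linarith

end

/-- Degradation of single-element marginal gains controlled by the submodularity index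
(Lemma 2): if `A ⊆ B ⊆ V`, `|B \ A| = M`, and `x ∈ V \ B`, then
`F_x(A) − F_x(B) ≥ M · λ_F(B, 2)`. -/
theorem marginal_gain_degradation (F : Finset V → ℝ)
    (A B : Finset V) (hAB : A ⊆ B) (M : ℕ) (hM : (B \ A).card = M)
    (x : V) (hx : x ∉ B) :
    (F (A ∪ {x}) - F A) - (F (B ∪ {x}) - F B) ≥ (M : ℝ) * smI F B 2 := by
  have hB : A ∪ B \ A = B := union_sdiff_of_subset hAB
  subst hM
  have h := card_mul_smI_two_le_marginal_sub_marginal F (D := B \ A) hB.le disjoint_sdiff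
    (hB ▸ hx)
  rwa [hB] at h
end

section
/- Approximation guarantee for local search on approximately submodular functions (Theorem 1 of the paper): let F : Finset V → ℝ be a nonnegative set function on a finite set V, let C ⊆ V be a maximizer of F over all subsets of V, and let S ⊆ V be a local optimum of F. Then 2·F(S) + F(V \ S) ≥ F(C) + ξ · λ_F(V, 2), where ξ = C(|S \ C|, 2) + C(|C \ S|, 2) + |V \ (S ∪ C)| · |S| + |C \ S| · |S ∩ C| and C(n, 2) = n(n−1)/2 denotes the binomial coefficient. -/
open Finset

variable {V : Type*} [Fintype V] [DecidableEq V]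

/-- A set `S ⊆ V` is a local optimum of `F` if `F(S) ≥ F(S \ {a})` for every `a ∈ S`
and `F(S) ≥ F(S ∪ {a})` for every `a ∉ S`. -/
def IsLocalOptimum (F : Finset V → ℝ) (S : Finset V) : Prop :=
  (∀ a ∈ S, F (S \ {a}) ≤ F S) ∧ (∀ a ∉ S, F (S ∪ {a}) ≤ F S)

/-!
Write `λ = λ_F(V, 2)`. By the definition of `λ`, adding one element `y` to a base lowers the
marginal gain of any other element `x` by at least `λ`; telescoping this over elements gives the
approximate submodularity inequality `F(X ∪ Y) + F(X ∩ Y) + |X \ Y| |Y \ X| λ ≤ F X + F Y`,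
and, at a local optimum `S`, the bounds `F(S ∪ T) ≤ F S - C(|T|, 2) λ` for `T` disjoint from `S`
and `F(S \ T) ≤ F S - C(|T|, 2) λ` for `T ⊆ S`. Adding the approximate submodularity inequalities
for the pairs `(S ∪ C, V \ S)` and `(C \ S, S ∩ C)` to the bounds for `T = C \ S` and `T = S \ C`
leaves only the nonnegative terms `F(V) + F(∅)`.
-/

/-- The paper's `F_T(A)`. -/
def marginalGain (F : Finset V → ℝ) (T A : Finset V) : ℝ :=
  F (A ∪ T) - F A

section
variable (F : Finset V → ℝ)

lemma smI_le_of_disjoint {L : Finset V} {k : ℕ} {T A : Finset V} (hA : A ⊆ L)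
    (hTA : Disjoint T A) (hT : T.card ≤ k) :
    smI F L k ≤ ∑ x ∈ T, marginalGain F {x} A - marginalGain F T A :=
  inf'_le (b := (T, A)) _ (by simp [hA, hT, disjoint_iff_inter_eq_empty.mp hTA])

omit [Fintype V] in
lemma marginalGain_insert (x : V) (T A : Finset V) :
    marginalGain F (insert x T) A = marginalGain F T A + marginalGain F {x} (A ∪ T) := by
  simp only [marginalGain, union_insert, union_singleton]
  ring

lemma marginalGain_singleton_union_singleton_le {x y : V} {A : Finset V} (hx : x ∉ A)
    (hy : y ∉ A) (hxy : x ≠ y) :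
    marginalGain F {x} (A ∪ {y}) ≤ marginalGain F {x} A - smI F univ 2 := by
  have h := smI_le_of_disjoint F (subset_univ A) (T := {x, y})
    (by simp [disjoint_insert_left, hx, hy]) card_le_two
  rw [sum_pair hxy, marginalGain_insert] at h
  linarith

lemma marginalGain_singleton_union_le {x : V} {A B : Finset V} (hxA : x ∉ A) (hxB : x ∉ B)
    (hAB : Disjoint A B) :
    marginalGain F {x} (A ∪ B) ≤ marginalGain F {x} A - B.card * smI F univ 2 := by
  induction B using Finset.induction_on with
  | empty => simp
  | @insert y B hyB ih =>
    rw [mem_insert, not_or] at hxB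
    rw [disjoint_insert_right] at hAB
    have hstep := marginalGain_singleton_union_singleton_le F (A := A ∪ B) (y := y)
      (by simp [hxA, hxB.2]) (by simp [hAB.1, hyB]) hxB.1
    rw [union_insert, ← union_singleton, card_insert_of_notMem hyB]
    push_cast
    linarith [ih hxB.2 hAB.2]

lemma marginalGain_union_le {T A B : Finset V} (hTA : Disjoint T A) (hTB : Disjoint T B)
    (hAB : Disjoint A B) :
    marginalGain F T (A ∪ B) ≤ marginalGain F T A - T.card * B.card * smI F univ 2 := by
  induction T using Finset.induction_on with
  | empty => simp [marginalGain]
  | @insert x T hxT ih =>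
    rw [disjoint_insert_left] at hTA hTB
    have hx := marginalGain_singleton_union_le F (A := A ∪ T) (by simp [hTA.1, hxT]) hTB.1
      (disjoint_union_left.mpr ⟨hAB, hTB.2⟩)
    rw [marginalGain_insert, marginalGain_insert, union_right_comm,
      card_insert_of_notMem hxT]
    push_cast
    linarith [ih hTA.2 hTB.2]

lemma map_union_add_map_inter_add_smI_le (X Y : Finset V) :
    F (X ∪ Y) + F (X ∩ Y) + (X \ Y).card * (Y \ X).card * smI F univ 2 ≤ F X + F Y := by
  have h := marginalGain_union_le F (T := X \ Y) (A := X ∩ Y) (B := Y \ X)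
    (by grind [disjoint_left]) (by grind [disjoint_left]) (by grind [disjoint_left])
  simp only [marginalGain] at h
  rw [show X ∩ Y ∪ Y \ X ∪ X \ Y = X ∪ Y by grind, show X ∩ Y ∪ Y \ X = Y by grind,
    show X ∩ Y ∪ X \ Y = X by grind] at h
  linarith

lemma map_union_le_of_forall_union_singleton_le {S : Finset V}
    (hS : ∀ a ∉ S, F (S ∪ {a}) ≤ F S) {T : Finset V} (hST : Disjoint S T) :
    F (S ∪ T) ≤ F S - (T.card.choose 2 : ℝ) * smI F univ 2 := by
  induction T using Finset.induction_on with
  | empty => simp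
  | @insert x T hxT ih =>
    rw [disjoint_insert_right] at hST
    have hx := marginalGain_singleton_union_le F hST.1 hxT hST.2
    have hgain : marginalGain F {x} S ≤ 0 := sub_nonpos.mpr (hS x hST.1)
    have h := marginalGain_insert F x T S
    simp only [marginalGain] at h hx hgain
    rw [card_insert_of_notMem hxT, Nat.choose_succ_succ', Nat.choose_one_right]
    push_cast
    linarith [ih hST.2]

lemma map_sdiff_le_of_forall_sdiff_singleton_le {S : Finset V}
    (hS : ∀ a ∈ S, F (S \ {a}) ≤ F S) {T : Finset V} (hTS : T ⊆ S) :
    F (S \ T) ≤ F S - (T.card.choose 2 : ℝ) * smI F univ 2 := by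
  induction T using Finset.induction_on with
  | empty => simp
  | @insert x T hxT ih =>
    rw [insert_subset_iff] at hTS
    have hx := marginalGain_singleton_union_le F (A := S \ insert x T) (by simp) hxT
      (by grind [disjoint_left])
    simp only [marginalGain] at hx
    rw [show S \ insert x T ∪ T ∪ {x} = S by grind, show S \ insert x T ∪ T = S \ {x} by grind,
      show S \ insert x T ∪ {x} = S \ T by grind] at hx
    rw [card_insert_of_notMem hxT, Nat.choose_succ_succ', Nat.choose_one_right]
    push_cast
    linarith [ih hTS.2, hS x hTS.1]

end

theorem local_search_guarantee_general (F : Finset V → ℝ)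
    (hF : ∀ A : Finset V, 0 ≤ F A)
    (C : Finset V)
    (S : Finset V) (hS : IsLocalOptimum F S) :
    2 * F S + F (Finset.univ \ S) ≥
      F C + (((S \ C).card.choose 2 : ℝ) + ((C \ S).card.choose 2 : ℝ)
        + ((Finset.univ \ (S ∪ C)).card : ℝ) * (S.card : ℝ)
        + ((C \ S).card : ℝ) * ((S ∩ C).card : ℝ)) * smI F Finset.univ 2 := by
  have hunion := map_union_le_of_forall_union_singleton_le F hS.2 (T := C \ S) disjoint_sdiff
  have hinter := map_sdiff_le_of_forall_sdiff_singleton_le F hS.1 (T := S \ C) sdiff_subset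
  have hfar := map_union_add_map_inter_add_smI_le F (S ∪ C) (univ \ S)
  have hnear := map_union_add_map_inter_add_smI_le F (C \ S) (S ∩ C)
  rw [union_sdiff_self_eq_union] at hunion
  rw [show S \ (S \ C) = S ∩ C by grind] at hinter
  rw [show S ∪ C ∪ univ \ S = univ by grind, show (S ∪ C) ∩ (univ \ S) = C \ S by grind,
    show (S ∪ C) \ (univ \ S) = S by grind,
    show (univ \ S) \ (S ∪ C) = univ \ (S ∪ C) by grind] at hfar
  rw [show C \ S ∪ S ∩ C = C by grind, show C \ S ∩ (S ∩ C) = ∅ by grind,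
    show (C \ S) \ (S ∩ C) = C \ S by grind, show (S ∩ C) \ (C \ S) = S ∩ C by grind] at hnear
  linarith [hF univ, hF ∅]

/-- Approximation guarantee for local search on approximately submodular functions
(Theorem 1): if `F` is nonnegative, `C` maximizes `F` over all subsets of `V`, and
`S` is a local optimum of `F`, then `2 F(S) + F(V \ S) ≥ F(C) + ξ · λ_F(V, 2)` with
`ξ = C(|S \ C|, 2) + C(|C \ S|, 2) + |V \ (S ∪ C)| · |S| + |C \ S| · |S ∩ C|`. -/
theorem local_search_guarantee (F : Finset V → ℝ)
    (hF : ∀ A : Finset V, 0 ≤ F A)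
    (C : Finset V) (hC : ∀ A : Finset V, F A ≤ F C)
    (S : Finset V) (hS : IsLocalOptimum F S) :
    2 * F S + F (Finset.univ \ S) ≥
      F C + (((S \ C).card.choose 2 : ℝ) + ((C \ S).card.choose 2 : ℝ)
        + ((Finset.univ \ (S ∪ C)).card : ℝ) * (S.card : ℝ)
        + ((C \ S).card : ℝ) * ((S ∩ C).card : ℝ)) * smI F Finset.univ 2 :=
  local_search_guarantee_general F hF C S hS
end

section
/- One-third approximation from the local search guarantee (Corollary 1 of the paper): let F : Finset V → ℝ be a nonnegative set function on a finite set V, let C ⊆ V be a maximizer of F over all subsets of V, let S ⊆ V be a local optimum of F, and set ξ = C(|S \ C|, 2) + C(|C \ S|, 2) + |V \ (S ∪ C)| · |S| + |C \ S| · |S ∩ C|, where C(n, 2) = n(n−1)/2. If F(C) + ξ · λ_F(V, 2) ≥ 0, then F(S) ≥ (1/3)·(F(C) + ξ · λ_F(V, 2)) or F(V \ S) ≥ (1/3)·(F(C) + ξ · λ_F(V, 2)). -/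
/-!
Write `λ = λ_F(V, 2)`. It bounds every second difference `F(A+x) + F(A+y) - F(A) - F(A+x+y)`
from below, so adding an element to a set lowers every other marginal gain by at least `λ`.
Summing marginal gains, this gives the approximate submodularity
`F(A ∪ B) + F(A ∩ B) + |A \ B| |B \ A| λ ≤ F(A) + F(B)`, and at a local optimum `S` it gives
`F(S ∩ C), F(S ∪ C) ≤ F(S) - C(·, 2) λ` (the first by passing to `A ↦ F(Aᶜ)`, which has the same
second differences). Adding these two bounds to approximate submodularity for the pairs
`(S ∪ C, V \ S)` and `(S ∩ C, C \ S)`, and dropping `F(∅), F(V) ≥ 0`, yields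
`F(C) + ξ λ ≤ 2 F(S) + F(V \ S)`.
-/

open Finset

variable {V : Type*} [Fintype V] [DecidableEq V]

/-- With `l = 0` this is submodularity in its diminishing-returns form. -/
def HasDiminishingReturns {α : Type*} [DecidableEq α] (F : Finset α → ℝ) (l : ℝ) : Prop :=
  ∀ ⦃A : Finset α⦄ ⦃x y : α⦄, x ∉ A → y ∉ A → x ≠ y →
    F (insert x (insert y A)) - F (insert y A) ≤ F (insert x A) - F A - l

lemma hasDiminishingReturns_smI (F : Finset V → ℝ) {k : ℕ} (hk : 2 ≤ k) :
    HasDiminishingReturns F (smI F univ k) := by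
  intro A x y hx hy hxy
  have hmem : (({x, y}, A) : Finset V × Finset V) ∈ univ.filter (fun p : Finset V × Finset V =>
      p.2 ⊆ univ ∧ p.1 ∩ p.2 = ∅ ∧ p.1.card ≤ k) := by
    simp only [mem_filter, mem_univ, subset_univ, true_and]
    refine ⟨?_, card_le_two.trans hk⟩
    ext a
    simp only [mem_inter, mem_insert, mem_singleton, notMem_empty, iff_false, not_and]
    rintro (rfl | rfl) <;> assumption
  have h : smI F univ k ≤ (∑ z ∈ {x, y}, (F (A ∪ {z}) - F A)) - (F (A ∪ {x, y}) - F A) :=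
    inf'_le _ hmem
  rw [sum_pair hxy, union_comm A {x}, union_comm A {y}, union_comm A {x, y}] at h
  simp only [singleton_union, insert_union] at h
  linarith

namespace HasDiminishingReturns

variable {α : Type*} [DecidableEq α] {F : Finset α → ℝ} {l : ℝ}

lemma compl [Fintype α] (hF : HasDiminishingReturns F l) :
    HasDiminishingReturns (fun A => F Aᶜ) l := by
  intro A x y hx hy hxy
  set B := (insert x (insert y A))ᶜ
  have hxB : x ∉ B := by simp [B]
  have hyB : y ∉ B := by simp [B]
  have h := hF hxB hyB hxy
  have e1 : insert x (insert y B) = Aᶜ := by grind [mem_compl]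
  have e2 : insert y B = (insert x A)ᶜ := by grind [mem_compl]
  have e3 : insert x B = (insert y A)ᶜ := by grind [mem_compl]
  rw [e1, e2, e3] at h
  linarith

lemma marginal_union_le (hF : HasDiminishingReturns F l) {x : α} {A D : Finset α}
    (hDA : Disjoint D A) (hxA : x ∉ A) (hxD : x ∉ D) :
    F (insert x (A ∪ D)) - F (A ∪ D) ≤ F (insert x A) - F A - #D * l := by
  induction D using Finset.induction_on with
  | empty => simp
  | @insert a D ha ih =>
    rw [disjoint_insert_left] at hDA
    rw [mem_insert, not_or] at hxD
    have hstep := hF (A := A ∪ D) (by simp [hxA, hxD.2]) (by simp [hDA.1, ha]) hxD.1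
    have hprev := ih hDA.2 hxD.2
    rw [union_insert, card_insert_of_notMem ha]
    push_cast
    linarith

lemma add_card_mul_card_le_of_disjoint (hF : HasDiminishingReturns F l) {X M Y : Finset α}
    (hXM : Disjoint X M) (hYM : Disjoint Y M) (hXY : Disjoint X Y) :
    F (M ∪ X ∪ Y) + F M + #X * #Y * l ≤ F (M ∪ X) + F (M ∪ Y) := by
  induction X using Finset.induction_on with
  | empty => simp [add_comm]
  | @insert a X ha ih =>
    rw [disjoint_insert_left] at hXM hXY
    have hstep := hF.marginal_union_le (A := M ∪ X) (D := Y)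
      (disjoint_union_right.mpr ⟨hYM, hXY.2.symm⟩) (by simp [hXM.1, ha]) hXY.1
    have hprev := ih hXM.2 hXY.2
    rw [union_insert, insert_union, card_insert_of_notMem ha]
    push_cast
    linarith

lemma union_add_inter_le (hF : HasDiminishingReturns F l) (A B : Finset α) :
    F (A ∪ B) + F (A ∩ B) + #(A \ B) * #(B \ A) * l ≤ F A + F B := by
  have h := hF.add_card_mul_card_le_of_disjoint (M := A ∩ B) (X := A \ B) (Y := B \ A)
    (disjoint_sdiff_inter A B) (by rw [inter_comm]; exact disjoint_sdiff_inter B A)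
    disjoint_sdiff_sdiff
  have hA : A ∩ B ∪ A \ B = A := by rw [union_comm, sdiff_union_inter]
  have hB : A ∩ B ∪ B \ A = B := by rw [union_comm, inter_comm, sdiff_union_inter]
  rwa [hA, hB, union_sdiff_self_eq_union] at h

lemma le_sub_choose_of_forall_insert_le (hF : HasDiminishingReturns F l) {S : Finset α}
    (hS : ∀ a ∉ S, F (insert a S) ≤ F S) {D : Finset α} (hD : Disjoint D S) :
    F (S ∪ D) ≤ F S - (#D).choose 2 * l := by
  induction D using Finset.induction_on with
  | empty => simp
  | @insert a D ha ih =>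
    rw [disjoint_insert_left] at hD
    have hstep := hF.marginal_union_le hD.2 hD.1 ha
    have hprev := ih hD.2
    have hloc := hS a hD.1
    rw [union_insert, card_insert_of_notMem ha, Nat.choose_succ_succ', Nat.choose_one_right]
    push_cast
    linarith

lemma le_sub_choose_of_forall_erase_le [Fintype α] (hF : HasDiminishingReturns F l)
    {S : Finset α} (hS : ∀ a ∈ S, F (S.erase a) ≤ F S) {D : Finset α} (hD : D ⊆ S) :
    F (S \ D) ≤ F S - (#D).choose 2 * l := by
  have h := hF.compl.le_sub_choose_of_forall_insert_le (S := Sᶜ)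
    (fun a ha => by simpa [compl_insert] using hS a (by simpa using ha))
    (hD.disjoint_compl_right)
  simpa [compl_union, sdiff_eq_inter_compl] using h

end HasDiminishingReturns

theorem local_search_one_third_general (F : Finset V → ℝ)
    (hF : ∀ A : Finset V, 0 ≤ F A)
    (C : Finset V)
    (S : Finset V) (hS : IsLocalOptimum F S)
    (ξ : ℝ)
    (hξ : ξ = ((S \ C).card.choose 2 : ℝ) + ((C \ S).card.choose 2 : ℝ)
        + ((Finset.univ \ (S ∪ C)).card : ℝ) * (S.card : ℝ)
        + ((C \ S).card : ℝ) * ((S ∩ C).card : ℝ)) :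
    F S ≥ (1 / 3) * (F C + ξ * smI F Finset.univ 2) ∨
      F (Finset.univ \ S) ≥ (1 / 3) * (F C + ξ * smI F Finset.univ 2) := by
  have hdr := hasDiminishingReturns_smI F le_rfl
  have hInter : F (S ∩ C) ≤ F S - (#(S \ C)).choose 2 * smI F univ 2 := by
    rw [← sdiff_sdiff_self_left]
    exact hdr.le_sub_choose_of_forall_erase_le
      (fun a ha => by rw [erase_eq]; exact hS.1 a ha) sdiff_subset
  have hUnion : F (S ∪ C) ≤ F S - (#(C \ S)).choose 2 * smI F univ 2 := by
    rw [← union_sdiff_self_eq_union]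
    exact hdr.le_sub_choose_of_forall_insert_le
      (fun a ha => by rw [insert_eq, union_comm]; exact hS.2 a ha) sdiff_disjoint
  have hOuter := hdr.union_add_inter_le (S ∪ C) (univ \ S)
  rw [show S ∪ C ∪ univ \ S = univ by grind,
    show (S ∪ C) ∩ (univ \ S) = C \ S by grind,
    show (S ∪ C) \ (univ \ S) = S by grind,
    show (univ \ S) \ (S ∪ C) = univ \ (S ∪ C) by grind] at hOuter
  have hInner := hdr.union_add_inter_le (S ∩ C) (C \ S)
  rw [show S ∩ C ∪ C \ S = C by grind,
    show S ∩ C ∩ (C \ S) = ∅ by grind,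
    show (S ∩ C) \ (C \ S) = S ∩ C by grind,
    show (C \ S) \ (S ∩ C) = C \ S by grind] at hInner
  have hKey : F C + ξ * smI F univ 2 ≤ 2 * F S + F (univ \ S) := by
    rw [hξ]
    linarith [hF ∅, hF univ]
  by_contra! h
  linarith [h.1, h.2]

/-- One-third approximation from the local search guarantee (Corollary 1):
with `ξ = C(|S \ C|, 2) + C(|C \ S|, 2) + |V \ (S ∪ C)| · |S| + |C \ S| · |S ∩ C|`,
if `F(C) + ξ · λ_F(V, 2) ≥ 0`, then `F(S) ≥ (1/3)(F(C) + ξ λ_F(V, 2))` or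
`F(V \ S) ≥ (1/3)(F(C) + ξ λ_F(V, 2))`. -/
theorem local_search_one_third (F : Finset V → ℝ)
    (hF : ∀ A : Finset V, 0 ≤ F A)
    (C : Finset V) (hC : ∀ A : Finset V, F A ≤ F C)
    (S : Finset V) (hS : IsLocalOptimum F S)
    (ξ : ℝ)
    (hξ : ξ = ((S \ C).card.choose 2 : ℝ) + ((C \ S).card.choose 2 : ℝ)
        + ((Finset.univ \ (S ∪ C)).card : ℝ) * (S.card : ℝ)
        + ((C \ S).card : ℝ) * ((S ∩ C).card : ℝ))
    (hpos : 0 ≤ F C + ξ * smI F Finset.univ 2) :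
    F S ≥ (1 / 3) * (F C + ξ * smI F Finset.univ 2) ∨
      F (Finset.univ \ S) ≥ (1 / 3) * (F C + ξ * smI F Finset.univ 2) :=
  local_search_one_third_general F hF C S hS ξ hξ
end

section
/- The paper's counterexample showing the attack objective need not be submodular: let V = {1, 2} and define F : Finset V → ℝ by F(S) = f(x + ε·∑_{i ∈ S} e_i − ε·∑_{i ∉ S} e_i), where f(z) = −log(1/(1 + exp(−⟨w, z⟩))) with w = (−1, −1), ε = 1, and x = (0, 0) (equivalently, F(S) = log(1 + exp(2|S| − 2))). Then the marginal gain of the element 2 at the empty set is strictly smaller than at {1}; that is, F({2}) − F(∅) < F({1, 2}) − F({1}), i.e., log 2 − log(1 + e^{−2}) < log(1 + e^{2}) − log 2. In particular, F is not submodular. -/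
open Finset

/-- `f(z) = −log(1/(1 + e^{−⟨w, z⟩}))` with `w = (−1, −1)`. -/
noncomputable def fCounter (z : Fin 2 → ℝ) : ℝ :=
  -Real.log (1 / (1 + Real.exp (-(∑ i, (![(-1 : ℝ), -1]) i * z i))))

/-- `F(S) = f(x + ε ∑_{i ∈ S} e_i − ε ∑_{i ∉ S} e_i)` with `ε = 1` and `x = (0, 0)`:
coordinate `i` of the perturbed point is `+1` if `i ∈ S` and `−1` otherwise. -/
noncomputable def FCounter (S : Finset (Fin 2)) : ℝ :=
  fCounter (fun i => (![(0 : ℝ), 0]) i + (if i ∈ S then (1 : ℝ) else -1))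

/-- `F` is submodular if for all `A ⊆ B ⊆ V` and `e ∈ V \ B`,
`Δ(e | A) ≥ Δ(e | B)` where `Δ(e | S) = F(S ∪ {e}) − F(S)`. -/
def Submodular {V : Type*} [DecidableEq V] (F : Finset V → ℝ) : Prop :=
  ∀ A B : Finset V, A ⊆ B → ∀ e ∉ B,
    F (B ∪ {e}) - F B ≤ F (A ∪ {e}) - F A

/-!
Here `F(S) = log (1 + exp (2|S| - 2))` is a strictly convex function of `|S|`, so its marginal
gains increase rather than decrease: adding the second element to `∅` moves the argument from
`-2` to `0`, adding it to `{1}` moves it from `0` to `2`, and the midpoint inequality for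
`log (1 + eˣ)` at `0` amounts to `(1 + e⁻²)(1 + e²) = 2 + 2 cosh 2 > 4`.
-/

theorem not_submodular_of_lt {V : Type*} [DecidableEq V] {F : Finset V → ℝ} {A B : Finset V}
    (hAB : A ⊆ B) {e : V} (he : e ∉ B) (h : F (A ∪ {e}) - F A < F (B ∪ {e}) - F B) :
    ¬ Submodular F :=
  fun hF => (hF A B hAB e he).not_gt h

noncomputable def softplus (x : ℝ) : ℝ := Real.log (1 + Real.exp x)

theorem two_mul_softplus_zero_lt {a : ℝ} (ha : a ≠ 0) :
    2 * softplus 0 < softplus (-a) + softplus a := by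
  have hexp : Real.exp (-a) * Real.exp a = 1 := by rw [← Real.exp_add, neg_add_cancel, Real.exp_zero]
  have hprod : (1 + Real.exp (-a)) * (1 + Real.exp a) = 2 + 2 * Real.cosh a := by
    rw [Real.cosh_eq]
    linear_combination hexp
  calc 2 * softplus 0 = Real.log ((1 + Real.exp 0) * (1 + Real.exp 0)) := by
        rw [Real.log_mul (by positivity) (by positivity), softplus, two_mul]
    _ < Real.log ((1 + Real.exp (-a)) * (1 + Real.exp a)) := by
        refine Real.log_lt_log (by positivity) ?_
        rw [hprod, Real.exp_zero]
        linarith [Real.one_lt_cosh.mpr ha]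
    _ = softplus (-a) + softplus a := Real.log_mul (by positivity) (by positivity)

theorem sum_ite_mem_one_neg_one {ι : Type*} [Fintype ι] [DecidableEq ι] (S : Finset ι) :
    ∑ i, (if i ∈ S then (1 : ℝ) else -1) = 2 * #S - Fintype.card ι := by
  rw [sum_ite, filter_mem_eq_inter, univ_inter, filter_not, filter_mem_eq_inter, univ_inter,
    ← compl_eq_univ_sdiff]
  simp only [sum_const, card_compl, nsmul_eq_mul, mul_one, mul_neg]
  rw [Nat.cast_sub (card_le_univ S)]
  ring

theorem FCounter_eq_softplus (S : Finset (Fin 2)) : FCounter S = softplus (2 * #S - 2) := by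
  have hsum := sum_ite_mem_one_neg_one S
  simp only [Fintype.card_fin, Nat.cast_ofNat, Fin.sum_univ_two] at hsum
  simp only [FCounter, fCounter, softplus, Fin.sum_univ_two, one_div, Real.log_inv, neg_neg,
    Matrix.cons_val_zero, Matrix.cons_val_one]
  rw [← hsum]
  ring_nf

/-- The paper's counterexample: with `V = {1, 2}` (encoded as `Fin 2`, the paper's
element `1` being `0` and element `2` being `1`), the marginal gain of element `2`
at `∅` is strictly smaller than at `{1}`; in particular, `F` is not submodular. -/
theorem counterexample_not_submodular :
    FCounter {1} - FCounter ∅ < FCounter {0, 1} - FCounter {0} ∧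
      ¬ Submodular FCounter := by
  have gain_lt : FCounter {1} - FCounter ∅ < FCounter {0, 1} - FCounter {0} := by
    simp only [FCounter_eq_softplus]
    norm_num
    linarith [two_mul_softplus_zero_lt (two_ne_zero (α := ℝ))]
  refine ⟨gain_lt, not_submodular_of_lt (empty_subset {0}) (e := 1) (by decide) ?_⟩
  simpa using gain_lt
end
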